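/- Let A be an I-dimensional cylindric ortholattice, and for each i ∈ I define the relation R_i on F(A) by x R_i y iff {∃_i c : c ∈ x} ⊆ y, with R_i[W] = {y ∈ F(A) : x R_i y for some x ∈ W}. Then the map φ satisfies: (i) a ≤ b if and only if φ(a) ⊆ φ(b) (in particular φ is injective); (ii) φ(a ⊓ b) = φ(a) ∩ φ(b); (iii) φ(aᗮ) = φ(a)^⊥; (iv) φ(a ⊔ b) = (φ(a) ∪ φ(b))^⊥⊥; (v) φ(∃_i a) = (R_i[φ(a)])^⊥⊥ for every i ∈ I and a ∈ A. -/

import Mathlib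

/-- An orthocomplementation on a bounded lattice. -/
def IsOrtho {A : Type*} [Lattice A] [BoundedOrder A] (perp : A → A) : Prop :=
  (∀ a : A, a ⊓ perp a = ⊥) ∧ (∀ a : A, a ⊔ perp a = ⊤) ∧
  (∀ a b : A, a ≤ b → perp b ≤ perp a) ∧ (∀ a : A, perp (perp a) = a)

/-- A quantifier on an ortholattice. -/
def IsQuantifier {A : Type*} [Lattice A] [BoundedOrder A] (perp E : A → A) : Prop :=
  (∀ a b : A, E (a ⊔ b) = E a ⊔ E b) ∧ E ⊥ = ⊥ ∧ (∀ a : A, E (E a) = E a) ∧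
  (∀ a : A, a ≤ E a) ∧ (∀ a : A, E (perp (E a)) = perp (E a))

/-- A proper filter: nonempty, upward closed, closed under meets, not containing ⊥. -/
def IsPF {A : Type*} [Lattice A] [BoundedOrder A] (x : Set A) : Prop :=
  x.Nonempty ∧ (∀ a ∈ x, ∀ b : A, a ≤ b → b ∈ x) ∧
  (∀ a ∈ x, ∀ b ∈ x, a ⊓ b ∈ x) ∧ (⊥ : A) ∉ x

/-- The set of proper filters of `A`. -/
abbrev PF (A : Type*) [Lattice A] [BoundedOrder A] : Type _ := {x : Set A // IsPF x}

/-- `phi a` is the set of proper filters containing `a`. -/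
def phi {A : Type*} [Lattice A] [BoundedOrder A] (a : A) : Set (PF A) := {x | a ∈ x.1}

/-- Orthogonal of a set of proper filters: `x ⊥ y` iff some `a ∈ x` has `perp a ∈ y`. -/
def oPerp {A : Type*} [Lattice A] [BoundedOrder A] (perp : A → A) (U : Set (PF A)) :
    Set (PF A) := {x | ∀ y ∈ U, ∃ a ∈ x.1, perp a ∈ y.1}

/-!
Every nonzero `a` generates the principal proper filter `↑a`, and a filter orthogonal to `↑a`
must contain `aᗮ`. Hence `φ(a)ᗮ = φ(aᗮ)` and `φ` is an order embedding whose images are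
`ᗮᗮ`-closed. Both `φ(a ⊔ b)` and `φ(∃ᵢ a)` are then the closure of a subset `U ⊆ φ(c)` such that
`Uᗮ ⊆ φ(cᗮ)`; for `∃ᵢ a` this is because `R_i` relates `↑a` to `↑(∃ᵢ a)`.
-/

section Ortho

variable {A : Type*} [Lattice A] [BoundedOrder A] {perp : A → A}

theorem IsOrtho.perp_perp (h : IsOrtho perp) (a : A) : perp (perp a) = a := h.2.2.2 a

theorem IsOrtho.le_perp_comm (h : IsOrtho perp) {a b : A} (hab : a ≤ perp b) : b ≤ perp a :=
  h.perp_perp b ▸ h.2.2.1 _ _ hab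

theorem IsOrtho.perp_bot (h : IsOrtho perp) : perp (⊥ : A) = ⊤ :=
  top_le_iff.mp (h.le_perp_comm bot_le)

theorem IsOrtho.perp_inf_perp_le_perp_sup (h : IsOrtho perp) (a b : A) :
    perp a ⊓ perp b ≤ perp (a ⊔ b) :=
  h.le_perp_comm <| sup_le (h.le_perp_comm inf_le_left) (h.le_perp_comm inf_le_right)

end Ortho

theorem IsQuantifier.monotone {A : Type*} [Lattice A] [BoundedOrder A] {perp E : A → A}
    (h : IsQuantifier perp E) : Monotone E := fun a b hab =>
  calc E a ≤ E a ⊔ E b := le_sup_left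
    _ = E b := by rw [← h.1, sup_eq_right.mpr hab]

namespace IsPF

variable {A : Type*} [Lattice A] [BoundedOrder A] {x : Set A} {a b : A}

theorem mem_of_le (hx : IsPF x) (ha : a ∈ x) (hab : a ≤ b) : b ∈ x := hx.2.1 a ha b hab

theorem inf_mem (hx : IsPF x) (ha : a ∈ x) (hb : b ∈ x) : a ⊓ b ∈ x := hx.2.2.1 a ha b hb

theorem top_mem (hx : IsPF x) : (⊤ : A) ∈ x :=
  let ⟨_, hc⟩ := hx.1
  hx.mem_of_le hc le_top

theorem Ici (ha : a ≠ ⊥) : IsPF (Set.Ici a) :=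
  ⟨Set.nonempty_Ici, fun _ hc _ hcb => le_trans hc hcb, fun _ hc _ hd => le_inf hc hd,
    fun h => ha (le_bot_iff.mp h)⟩

end IsPF

section Filters

variable {A : Type*} [Lattice A] [BoundedOrder A]

def principalPF (a : A) (ha : a ≠ ⊥) : PF A := ⟨Set.Ici a, IsPF.Ici ha⟩

theorem principalPF_mem_phi (a : A) (ha : a ≠ ⊥) : principalPF a ha ∈ phi a := le_refl a

theorem phi_subset_phi_iff {a b : A} : phi a ⊆ phi b ↔ a ≤ b := by
  refine ⟨fun h => ?_, fun hab x hx => x.2.mem_of_le hx hab⟩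
  by_cases ha : a = ⊥
  · exact ha ▸ bot_le
  · exact h (principalPF_mem_phi a ha)

theorem phi_injective : Function.Injective (phi : A → Set (PF A)) := fun _ _ h =>
  le_antisymm (phi_subset_phi_iff.mp h.le) (phi_subset_phi_iff.mp h.ge)

theorem phi_inf (a b : A) : phi (a ⊓ b) = phi a ∩ phi b :=
  Set.ext fun x => ⟨fun hx => ⟨x.2.mem_of_le hx inf_le_left, x.2.mem_of_le hx inf_le_right⟩,
    fun hx => x.2.inf_mem hx.1 hx.2⟩

theorem oPerp_anti (perp : A → A) {U V : Set (PF A)} (h : U ⊆ V) :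
    oPerp perp V ⊆ oPerp perp U := fun _ hx y hy => hx y (h hy)

theorem oPerp_subset_phi_perp {perp : A → A} (hp : IsOrtho perp) {U : Set (PF A)} {a : A}
    (hU : ∀ ha : a ≠ ⊥, principalPF a ha ∈ U) : oPerp perp U ⊆ phi (perp a) := by
  intro y hy
  by_cases ha : a = ⊥
  · simpa only [phi, ha, hp.perp_bot, Set.mem_ofPred_eq] using y.2.top_mem
  · obtain ⟨c, hcy, hc⟩ := hy _ (hU ha)
    exact y.2.mem_of_le hcy (hp.le_perp_comm hc)

theorem phi_perp {perp : A → A} (hp : IsOrtho perp) (a : A) :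
    phi (perp a) = oPerp perp (phi a) :=
  (oPerp_subset_phi_perp hp (principalPF_mem_phi a)).antisymm'
    fun _ hx _ hy => ⟨perp a, hx, (hp.perp_perp a).symm ▸ hy⟩

theorem oPerp_oPerp_phi {perp : A → A} (hp : IsOrtho perp) (a : A) :
    oPerp perp (oPerp perp (phi a)) = phi a := by
  rw [← phi_perp hp, ← phi_perp hp, hp.perp_perp]

theorem phi_eq_oPerp_oPerp {perp : A → A} (hp : IsOrtho perp) {U : Set (PF A)} {c : A}
    (hU : U ⊆ phi c) (hU' : oPerp perp U ⊆ phi (perp c)) :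
    phi c = oPerp perp (oPerp perp U) := by
  apply le_antisymm
  · calc phi c = oPerp perp (oPerp perp (phi c)) := (oPerp_oPerp_phi hp c).symm
      _ = oPerp perp (phi (perp c)) := by rw [phi_perp hp]
      _ ⊆ oPerp perp (oPerp perp U) := oPerp_anti perp hU'
  · calc oPerp perp (oPerp perp U) ⊆ oPerp perp (oPerp perp (phi c)) :=
          oPerp_anti perp (oPerp_anti perp hU)
      _ = phi c := oPerp_oPerp_phi hp c

theorem phi_sup {perp : A → A} (hp : IsOrtho perp) (a b : A) :
    phi (a ⊔ b) = oPerp perp (oPerp perp (phi a ∪ phi b)) := by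
  refine phi_eq_oPerp_oPerp hp (Set.union_subset ?_ ?_) fun y hy => ?_
  · exact phi_subset_phi_iff.mpr le_sup_left
  · exact phi_subset_phi_iff.mpr le_sup_right
  have hya : perp a ∈ y.1 := oPerp_subset_phi_perp hp (principalPF_mem_phi a)
    (oPerp_anti perp Set.subset_union_left hy)
  have hyb : perp b ∈ y.1 := oPerp_subset_phi_perp hp (principalPF_mem_phi b)
    (oPerp_anti perp Set.subset_union_right hy)
  exact y.2.mem_of_le (y.2.inf_mem hya hyb) (hp.perp_inf_perp_le_perp_sup a b)

theorem phi_map_eq_oPerp_oPerp {perp E : A → A} (hp : IsOrtho perp) (hE : Monotone E)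
    (hE₀ : E ⊥ = ⊥) (a : A) :
    phi (E a) = oPerp perp (oPerp perp {y : PF A | ∃ x ∈ phi a, E '' x.1 ⊆ y.1}) := by
  refine phi_eq_oPerp_oPerp hp (fun y ⟨x, hxa, hxy⟩ => hxy ⟨a, hxa, rfl⟩)
    (oPerp_subset_phi_perp hp fun hEa => ?_)
  have ha : a ≠ ⊥ := fun h => hEa (h ▸ hE₀)
  exact ⟨principalPF a ha, principalPF_mem_phi a ha, Set.image_subset_iff.mpr fun _ hd => hE hd⟩

end Filters

theorem stmt4_general {A : Type*} [Lattice A] [BoundedOrder A] {I : Type*} (perp : A → A)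
    (hA : IsOrtho perp) (ex : I → A → A) (hq : ∀ i, IsQuantifier perp (ex i)) :
    (∀ a b : A, a ≤ b ↔ phi a ⊆ phi b) ∧
    Function.Injective (phi : A → Set (PF A)) ∧
    (∀ a b : A, phi (a ⊓ b) = phi a ∩ phi b) ∧
    (∀ a : A, phi (perp a) = oPerp perp (phi a)) ∧
    (∀ a b : A, phi (a ⊔ b) = oPerp perp (oPerp perp (phi a ∪ phi b))) ∧
    (∀ (i : I) (a : A), phi (ex i a) =
      oPerp perp (oPerp perp {y : PF A | ∃ x ∈ phi a, ex i '' x.1 ⊆ y.1})) :=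
  ⟨fun _ _ => phi_subset_phi_iff.symm, phi_injective, phi_inf, phi_perp hA, phi_sup hA,
    fun i => phi_map_eq_oPerp_oPerp hA (hq i).monotone (hq i).2.1⟩

theorem stmt4 {A : Type*} [Lattice A] [BoundedOrder A] {I : Type*} (perp : A → A)
    (hA : IsOrtho perp) (ex : I → A → A) (hq : ∀ i, IsQuantifier perp (ex i))
    (hcomm : ∀ i k (a : A), ex i (ex k a) = ex k (ex i a))
    (δ : I → I → A) (hδsym : ∀ i k, δ i k = δ k i) (hδrefl : ∀ i, δ i i = ⊤)
    (hδ : ∀ i k l, k ≠ i → k ≠ l → ex k (δ i k ⊓ δ k l) = δ i l) :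
    (∀ a b : A, a ≤ b ↔ phi a ⊆ phi b) ∧
    Function.Injective (phi : A → Set (PF A)) ∧
    (∀ a b : A, phi (a ⊓ b) = phi a ∩ phi b) ∧
    (∀ a : A, phi (perp a) = oPerp perp (phi a)) ∧
    (∀ a b : A, phi (a ⊔ b) = oPerp perp (oPerp perp (phi a ∪ phi b))) ∧
    (∀ (i : I) (a : A), phi (ex i a) =
      oPerp perp (oPerp perp {y : PF A | ∃ x ∈ phi a, ex i '' x.1 ⊆ y.1})) :=
  stmt4_general perp hA ex hq
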